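/- Let W, X be real-valued random variables and Z a {0,1}-valued random variable. Then W - 𝔼[W|X] is independent of the pair (X,Z) if and only if both (i) W is conditionally independent of Z given X, and (ii) W - 𝔼[W|X] is independent of X. -/

import Mathlib

/-!
Write `R = W - 𝔼[W|X]`. Since `𝔼[W|X]` is `σ(X)`-measurable, `σ(R) ⊔ σ(X) = σ(W) ⊔ σ(X)`, and
conditional independence given `σ(X)` only sees the first σ-algebra up to joining `σ(X)`; hence
`R ⊥⊥ Z | X ↔ W ⊥⊥ Z | X`. It remains to show, for arbitrary σ-algebras, that
`𝓜₁ ⊥ 𝓜 ⊔ 𝓜₂ ↔ 𝓜₁ ⊥ 𝓜 ∧ 𝓜₁ ⊥ 𝓜₂ | 𝓜`. Once `𝓜₁ ⊥ 𝓜`, `ℙ(A | 𝓜) = ℙ(A)` for `A ∈ 𝓜₁`, and then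
both sides amount to `ℙ(A ∩ B ∩ C) = ℙ(A) ℙ(B ∩ C)` for `B ∈ 𝓜₂`, `C ∈ 𝓜`: on the left because
the sets `B ∩ C` form a π-system generating `𝓜 ⊔ 𝓜₂`, on the right by integrating
`ℙ(A ∩ B | 𝓜) = ℙ(A) ℙ(B | 𝓜)` over `C`.
-/

open MeasureTheory ProbabilityTheory MeasurableSpace Set

section PiSystem

variable {Ω : Type*}

lemma IsPiSystem.image2_inter {C D : Set (Set Ω)} (hC : IsPiSystem C) (hD : IsPiSystem D) :
    IsPiSystem (image2 (· ∩ ·) C D) := by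
  rintro _ ⟨s₁, hs₁, t₁, ht₁, rfl⟩ _ ⟨s₂, hs₂, t₂, ht₂, rfl⟩ hne
  refine ⟨s₁ ∩ s₂, hC _ hs₁ _ hs₂ (hne.mono ?_), t₁ ∩ t₂, hD _ ht₁ _ ht₂ (hne.mono ?_),
    inter_inter_inter_comm _ _ _ _⟩ <;> intro ω hω <;> simp_all

lemma MeasurableSpace.sup_eq_generateFrom_image2_inter (m₁ m₂ : MeasurableSpace Ω) :
    m₁ ⊔ m₂ =
      generateFrom (image2 (· ∩ ·) {s | MeasurableSet[m₁] s} {s | MeasurableSet[m₂] s}) := by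
  refine le_antisymm (sup_le ?_ ?_) (generateFrom_le ?_)
  · exact fun s hs ↦ measurableSet_generateFrom ⟨s, hs, univ, MeasurableSet.univ, inter_univ s⟩
  · exact fun s hs ↦ measurableSet_generateFrom ⟨univ, MeasurableSet.univ, s, hs, univ_inter s⟩
  · rintro _ ⟨s, hs, t, ht, rfl⟩
    exact (le_sup_left (a := m₁) _ hs).inter (le_sup_right (a := m₁) _ ht)

end PiSystem

lemma MeasurableSpace.comap_sub_sup_eq {Ω β : Type*} [AddGroup β] [mβ : MeasurableSpace β]
    [MeasurableAdd₂ β] [MeasurableSub₂ β] {m : MeasurableSpace Ω} (f : Ω → β) {g : Ω → β}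
    (hg : Measurable[m] g) :
    mβ.comap (fun ω ↦ f ω - g ω) ⊔ m = mβ.comap f ⊔ m := by
  have hf : Measurable[mβ.comap f] f := comap_measurable f
  have hfg : Measurable[mβ.comap (fun ω ↦ f ω - g ω)] (fun ω ↦ f ω - g ω) := comap_measurable _
  refine le_antisymm (sup_le ?_ le_sup_right) (sup_le ?_ le_sup_right)
  · exact ((hf.mono le_sup_left le_rfl).sub (hg.mono le_sup_right le_rfl)).comap_le
  · have : Measurable[mβ.comap (fun ω ↦ f ω - g ω) ⊔ m] (fun ω ↦ (f ω - g ω) + g ω) :=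
      (hfg.mono le_sup_left le_rfl).add (hg.mono le_sup_right le_rfl)
    simpa only [sub_add_cancel] using this.comap_le

section CondExp

variable {Ω : Type*} {m mΩ : MeasurableSpace Ω} {μ : Measure Ω} [IsFiniteMeasure μ]

lemma setIntegral_condExp_indicator_one (hm : m ≤ mΩ) {S C : Set Ω} (hS : MeasurableSet S)
    (hC : MeasurableSet[m] C) : ∫ ω in C, (μ⟦S | m⟧) ω ∂μ = μ.real (S ∩ C) := by
  rw [setIntegral_condExp hm ((integrable_const 1).indicator hS) hC, setIntegral_indicator hS,
    setIntegral_const, smul_eq_mul, mul_one, inter_comm, measureReal_def]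

lemma condExp_inter_ae_eq_indicator {S C : Set Ω} (hS : MeasurableSet S)
    (hC : MeasurableSet[m] C) : μ⟦S ∩ C | m⟧ =ᵐ[μ] C.indicator (μ⟦S | m⟧) := by
  rw [inter_comm, ← indicator_indicator]
  exact condExp_indicator ((integrable_const 1).indicator hS) hC

lemma condExp_inter_ae_eq_const_mul_iff (hm : m ≤ mΩ) {A B : Set Ω} (hA : MeasurableSet A)
    (hB : MeasurableSet B) (c : ℝ) :
    μ⟦A ∩ B | m⟧ =ᵐ[μ] (fun ω ↦ c * (μ⟦B | m⟧) ω) ↔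
      ∀ C, MeasurableSet[m] C → μ.real (A ∩ B ∩ C) = c * μ.real (B ∩ C) := by
  constructor
  · intro h C hC
    rw [← setIntegral_condExp_indicator_one hm (hA.inter hB) hC,
      ← setIntegral_condExp_indicator_one hm hB hC, ← integral_const_mul]
    exact setIntegral_congr_ae (hm _ hC) (h.mono fun ω hω _ ↦ hω)
  · intro h
    refine (ae_eq_condExp_of_forall_setIntegral_eq hm
      ((integrable_const 1).indicator (hA.inter hB))
      (fun C _ _ ↦ (integrable_condExp.const_mul c).integrableOn) (fun C hC _ ↦ ?_)
      (stronglyMeasurable_condExp.const_mul c).aestronglyMeasurable).symm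
    rw [integral_const_mul, setIntegral_condExp_indicator_one hm hB hC, ← h C hC,
      ← setIntegral_condExp_indicator_one hm (hA.inter hB) hC,
      setIntegral_condExp hm ((integrable_const 1).indicator (hA.inter hB)) hC]

end CondExp

lemma measure_inter_eq_mul_iff_measureReal {Ω : Type*} {mΩ : MeasurableSpace Ω} {μ : Measure Ω}
    [IsFiniteMeasure μ] (s t : Set Ω) :
    μ (s ∩ t) = μ s * μ t ↔ μ.real (s ∩ t) = μ.real s * μ.real t := by
  rw [measureReal_def, measureReal_def, measureReal_def, ← ENNReal.toReal_mul,
    ENNReal.toReal_eq_toReal_iff' (measure_ne_top μ _)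
      (ENNReal.mul_ne_top (measure_ne_top μ _) (measure_ne_top μ _))]

namespace ProbabilityTheory

variable {Ω : Type*} {m m₁ m₂ mΩ : MeasurableSpace Ω} {μ : Measure Ω}

lemma Indep.condExp_indicator_ae_eq_measureReal [IsProbabilityMeasure μ] (hm₁ : m₁ ≤ mΩ)
    (hm : m ≤ mΩ) (h : Indep m₁ m μ) {A : Set Ω} (hA : MeasurableSet[m₁] A) :
    μ⟦A | m⟧ =ᵐ[μ] fun _ ↦ μ.real A := by
  have := condExp_indep_eq hm₁ hm ((stronglyMeasurable_const (b := (1 : ℝ))).indicator hA) h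
  rwa [integral_indicator_const _ (hm₁ _ hA), smul_eq_mul, mul_one] at this

lemma Indep.condExp_inter_ae_eq_mul_iff [IsProbabilityMeasure μ] (hm₁ : m₁ ≤ mΩ) (hm : m ≤ mΩ)
    (h : Indep m₁ m μ) {A B : Set Ω} (hA : MeasurableSet[m₁] A) (hB : MeasurableSet B) :
    μ⟦A ∩ B | m⟧ =ᵐ[μ] μ⟦A | m⟧ * μ⟦B | m⟧ ↔
      ∀ C, MeasurableSet[m] C → μ.real (A ∩ B ∩ C) = μ.real A * μ.real (B ∩ C) := by
  rw [← condExp_inter_ae_eq_const_mul_iff hm (hm₁ _ hA) hB]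
  have hmul : μ⟦A | m⟧ * μ⟦B | m⟧ =ᵐ[μ] fun ω ↦ μ.real A * (μ⟦B | m⟧) ω :=
    (h.condExp_indicator_ae_eq_measureReal hm₁ hm hA).mul (Filter.EventuallyEq.refl _ _)
  exact ⟨fun h ↦ h.trans hmul, fun h ↦ h.trans hmul.symm⟩

variable [StandardBorelSpace Ω] {hm : m ≤ mΩ}

lemma CondIndep.sup_left [IsFiniteMeasure μ] (hm₁ : m₁ ≤ mΩ) (hm₂ : m₂ ≤ mΩ)
    (h : CondIndep m m₁ m₂ hm μ) : CondIndep m (m₁ ⊔ m) m₂ hm μ := by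
  refine CondIndepSets.condIndep (sup_le hm₁ hm) hm₂
    ((@isPiSystem_measurableSet Ω m₁).image2_inter (@isPiSystem_measurableSet Ω m))
    (@isPiSystem_measurableSet Ω m₂) (sup_eq_generateFrom_image2_inter m₁ m)
    (@generateFrom_measurableSet Ω m₂).symm ?_
  refine (condIndepSets_iff _ _ _ _ ?_ (fun t ht ↦ hm₂ t ht) μ).2 ?_
  · rintro _ ⟨s, hs, c, hc, rfl⟩
    exact (hm₁ _ hs).inter (hm _ hc)
  rintro _ t ⟨s, hs, c, hc, rfl⟩ ht
  have hst := (condIndep_iff _ _ _ hm hm₁ hm₂ μ).1 h s t hs ht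
  rw [inter_right_comm]
  filter_upwards [condExp_inter_ae_eq_indicator ((hm₁ _ hs).inter (hm₂ _ ht)) hc,
    condExp_inter_ae_eq_indicator (μ := μ) (hm₁ _ hs) hc, hst] with ω h_st h_s h_prod
  by_cases hω : ω ∈ c <;> simp_all

lemma condIndep_sup_left_iff [IsFiniteMeasure μ] (hm₁ : m₁ ≤ mΩ) (hm₂ : m₂ ≤ mΩ) :
    CondIndep m (m₁ ⊔ m) m₂ hm μ ↔ CondIndep m m₁ m₂ hm μ :=
  ⟨fun h ↦ condIndep_of_condIndep_of_le_left h le_sup_left, CondIndep.sup_left hm₁ hm₂⟩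

lemma indep_sup_right_iff_indep_and_condIndep [IsProbabilityMeasure μ] (hm₁ : m₁ ≤ mΩ)
    (hm₂ : m₂ ≤ mΩ) :
    Indep m₁ (m ⊔ m₂) μ ↔ Indep m₁ m μ ∧ CondIndep m m₁ m₂ hm μ := by
  rw [condIndep_iff _ _ _ hm hm₁ hm₂]
  constructor
  · intro h
    have hind : Indep m₁ m μ := indep_of_indep_of_le_right h le_sup_left
    refine ⟨hind, fun A B hA hB ↦ (hind.condExp_inter_ae_eq_mul_iff hm₁ hm hA (hm₂ _ hB)).2 ?_⟩
    intro C hC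
    have hBC : MeasurableSet[m ⊔ m₂] (B ∩ C) :=
      (le_sup_right (a := m) _ hB).inter (le_sup_left (b := m₂) _ hC)
    rw [inter_assoc, ← measure_inter_eq_mul_iff_measureReal]
    exact (Indep_iff _ _ μ).1 h A (B ∩ C) hA hBC
  · rintro ⟨hind, hcond⟩
    refine IndepSets.indep hm₁ (sup_le hm hm₂) (@isPiSystem_measurableSet Ω m₁)
      ((@isPiSystem_measurableSet Ω m).image2_inter (@isPiSystem_measurableSet Ω m₂))
      (@generateFrom_measurableSet Ω m₁).symm (sup_eq_generateFrom_image2_inter m m₂) ?_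
    rw [IndepSets_iff]
    rintro A _ hA ⟨C, hC, B, hB, rfl⟩
    dsimp only
    rw [measure_inter_eq_mul_iff_measureReal, inter_comm C B, ← inter_assoc]
    exact (hind.condExp_inter_ae_eq_mul_iff hm₁ hm hA (hm₂ _ hB)).1 (hcond A B hA hB) C hC

end ProbabilityTheory

theorem stmt4_general {Ω 𝒳 : Type*} [MeasurableSpace Ω] [StandardBorelSpace Ω]
    [MeasurableSpace 𝒳]
    (μ : Measure Ω) [IsProbabilityMeasure μ]
    (W : Ω → ℝ) (X : Ω → 𝒳) (Z : Ω → Bool)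
    (hW : Measurable W) (hX : Measurable X) (hZ : Measurable Z) :
    IndepFun (fun ω => W ω - (μ[W|MeasurableSpace.comap X inferInstance]) ω)
        (fun ω => (X ω, Z ω)) μ
      ↔ (CondIndepFun (MeasurableSpace.comap X inferInstance) hX.comap_le W Z μ
          ∧ IndepFun (fun ω => W ω - (μ[W|MeasurableSpace.comap X inferInstance]) ω) X μ) := by
  have hE : Measurable[MeasurableSpace.comap X inferInstance]
      (μ[W|MeasurableSpace.comap X inferInstance]) :=
    stronglyMeasurable_condExp.measurable
  have hR : Measurable fun ω ↦ W ω - (μ[W|MeasurableSpace.comap X inferInstance]) ω :=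
    hW.sub (hE.mono hX.comap_le le_rfl)
  have hXZ : MeasurableSpace.comap (fun ω ↦ (X ω, Z ω)) inferInstance =
      MeasurableSpace.comap X inferInstance ⊔ MeasurableSpace.comap Z inferInstance :=
    comap_prodMk X Z
  rw [IndepFun_iff_Indep, hXZ,
    indep_sup_right_iff_indep_and_condIndep (hm := hX.comap_le) hR.comap_le hZ.comap_le,
    ← IndepFun_iff_Indep, condIndepFun_iff_condIndep,
    ← condIndep_sup_left_iff hR.comap_le hZ.comap_le, comap_sub_sup_eq W hE,
    condIndep_sup_left_iff hW.comap_le hZ.comap_le, and_comm]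

/-- `W - 𝔼[W|X]` is independent of the pair `(X,Z)` iff `W ⊥⊥ Z | X` and
`W - 𝔼[W|X]` is independent of `X`. -/
theorem stmt4 {Ω 𝒳 : Type*} [MeasurableSpace Ω] [StandardBorelSpace Ω] [Nonempty Ω]
    [MeasurableSpace 𝒳]
    (μ : Measure Ω) [IsProbabilityMeasure μ]
    (W : Ω → ℝ) (X : Ω → 𝒳) (Z : Ω → Bool)
    (hW : Measurable W) (hX : Measurable X) (hZ : Measurable Z)
    (hWint : Integrable W μ) :
    IndepFun (fun ω => W ω - (μ[W|MeasurableSpace.comap X inferInstance]) ω)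
        (fun ω => (X ω, Z ω)) μ
      ↔ (CondIndepFun (MeasurableSpace.comap X inferInstance) hX.comap_le W Z μ
          ∧ IndepFun (fun ω => W ω - (μ[W|MeasurableSpace.comap X inferInstance]) ω) X μ) :=
  stmt4_general μ W X Z hW hX hZ
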